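/- Let 0 < R_1 < R_2 < R_3 and α = ln(R_3/R_2)/ln(R_3/R_1). Then for every integer n ≥ 1 and nonnegative reals A, B: n R_2^{2n} A² + n R_2^{−2n} B² ≤ (n R_1^{2n} A² + n R_1^{−2n} B²)^α (n R_3^{2n} A² + n R_3^{−2n} B²)^{1−α}. Consequently, summing over n and applying Hölder's inequality, if S(r) = Σ_n (n r^{2n} |a_n|² + n r^{−2n} |b_n|²) for sequences (a_n), (b_n), then S(R_2) ≤ S(R_1)^α S(R_3)^{1−α}. -/

import Mathlib

/-!
Since `R₂ = R₁ ^ α * R₃ ^ (1 - α)`, every monomial `c * R₂ ^ m` with `c ≥ 0` and `m ∈ ℤ` is the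
weighted geometric mean `(c * R₁ ^ m) ^ α * (c * R₃ ^ m) ^ (1 - α)`. Hölder's inequality with
exponents `1 / α` and `1 / (1 - α)` then bounds a sum of such means by the corresponding mean of
the sums, first for the two terms of a single mode and then for the series over all modes.
-/

open Real

namespace Real

theorem summable_and_tsum_rpow_mul_rpow_one_sub_le {ι : Type*} {f g : ι → ℝ} {α : ℝ}
    (hα₀ : 0 < α) (hα₁ : α < 1) (hf : ∀ i, 0 ≤ f i) (hg : ∀ i, 0 ≤ g i)
    (hf_sum : Summable f) (hg_sum : Summable g) :
    Summable (fun i => f i ^ α * g i ^ (1 - α)) ∧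
      ∑' i, f i ^ α * g i ^ (1 - α) ≤ (∑' i, f i) ^ α * (∑' i, g i) ^ (1 - α) := by
  have hα₁' : 1 - α ≠ 0 := (sub_pos.2 hα₁).ne'
  have h := summable_and_inner_le_Lp_mul_Lq_tsum_of_nonneg
    (HolderConjugate.inv_one_sub_inv hα₀ hα₁) (f := fun i => f i ^ α)
    (g := fun i => g i ^ (1 - α)) (fun i => rpow_nonneg (hf i) _) (fun i => rpow_nonneg (hg i) _)
  simp only [rpow_rpow_inv (hf _) hα₀.ne', rpow_rpow_inv (hg _) hα₁', one_div, inv_inv] at h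
  exact h hf_sum hg_sum

theorem add_rpow_mul_rpow_one_sub_le {α x₁ x₂ y₁ y₂ : ℝ} (hα₀ : 0 < α) (hα₁ : α < 1)
    (hx₁ : 0 ≤ x₁) (hx₂ : 0 ≤ x₂) (hy₁ : 0 ≤ y₁) (hy₂ : 0 ≤ y₂) :
    x₁ ^ α * y₁ ^ (1 - α) + x₂ ^ α * y₂ ^ (1 - α) ≤ (x₁ + x₂) ^ α * (y₁ + y₂) ^ (1 - α) := by
  simpa [tsum_fintype, Fin.sum_univ_two] using
    (summable_and_tsum_rpow_mul_rpow_one_sub_le hα₀ hα₁ (f := ![x₁, x₂]) (g := ![y₁, y₂])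
      (Fin.forall_fin_two.2 ⟨hx₁, hx₂⟩) (Fin.forall_fin_two.2 ⟨hy₁, hy₂⟩)
      (.of_finite) (.of_finite)).2

theorem tsum_le_tsum_rpow_mul_tsum_rpow_one_sub_of_le {ι : Type*} {f g h : ι → ℝ} {α : ℝ}
    (hα₀ : 0 < α) (hα₁ : α < 1) (hf : ∀ i, 0 ≤ f i) (hg : ∀ i, 0 ≤ g i) (hh : ∀ i, 0 ≤ h i)
    (hf_sum : Summable f) (hg_sum : Summable g) (hle : ∀ i, h i ≤ f i ^ α * g i ^ (1 - α)) :
    ∑' i, h i ≤ (∑' i, f i) ^ α * (∑' i, g i) ^ (1 - α) := by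
  obtain ⟨hfg_sum, hfg_le⟩ :=
    summable_and_tsum_rpow_mul_rpow_one_sub_le hα₀ hα₁ hf hg hf_sum hg_sum
  exact ((hfg_sum.of_nonneg_of_le hh hle).tsum_le_tsum hle hfg_sum).trans hfg_le

theorem rpow_mul_rpow_one_sub_self {c : ℝ} (hc : 0 ≤ c) (α : ℝ) : c ^ α * c ^ (1 - α) = c := by
  rw [← rpow_add' hc (by norm_num), add_sub_cancel, rpow_one]

theorem mul_zpow_mul_eq_rpow_mul_rpow_one_sub {c d R₁ R₃ : ℝ} (hc : 0 ≤ c) (hd : 0 ≤ d)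
    (h₁ : 0 ≤ R₁) (h₃ : 0 ≤ R₃) (α : ℝ) (m : ℤ) :
    c * (R₁ ^ α * R₃ ^ (1 - α)) ^ m * d = (c * R₁ ^ m * d) ^ α * (c * R₃ ^ m * d) ^ (1 - α) := by
  have hu : 0 ≤ R₁ ^ m := zpow_nonneg h₁ m
  have hv : 0 ≤ R₃ ^ m := zpow_nonneg h₃ m
  rw [mul_zpow, rpow_zpow_comm h₁, rpow_zpow_comm h₃, mul_rpow (mul_nonneg hc hu) hd,
    mul_rpow (mul_nonneg hc hv) hd, mul_rpow hc hu, mul_rpow hc hv]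
  calc c * ((R₁ ^ m) ^ α * (R₃ ^ m) ^ (1 - α)) * d
      = (c ^ α * c ^ (1 - α)) * ((R₁ ^ m) ^ α * (R₃ ^ m) ^ (1 - α)) * (d ^ α * d ^ (1 - α)) := by
        rw [rpow_mul_rpow_one_sub_self hc, rpow_mul_rpow_one_sub_self hd]
    _ = _ := by ring

end Real

noncomputable def modeEnergy (n : ℕ) (A B r : ℝ) : ℝ :=
  (n : ℝ) * r ^ (2 * n) * A ^ 2 + (n : ℝ) * r ^ (-(2 * n : ℤ)) * B ^ 2

theorem modeEnergy_nonneg (n : ℕ) (A B : ℝ) {r : ℝ} (hr : 0 ≤ r) : 0 ≤ modeEnergy n A B r := by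
  unfold modeEnergy
  have := zpow_nonneg hr (-(2 * n : ℤ))
  positivity

theorem modeEnergy_rpow_mul_rpow_one_sub_le {R₁ R₃ α : ℝ} (hα₀ : 0 < α) (hα₁ : α < 1)
    (h₁ : 0 ≤ R₁) (h₃ : 0 ≤ R₃) (n : ℕ) (A B : ℝ) :
    modeEnergy n A B (R₁ ^ α * R₃ ^ (1 - α)) ≤
      modeEnergy n A B R₁ ^ α * modeEnergy n A B R₃ ^ (1 - α) := by
  unfold modeEnergy
  simp only [← zpow_natCast (R₁ ^ α * R₃ ^ (1 - α)), ← zpow_natCast R₁, ← zpow_natCast R₃]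
  have hn : (0 : ℝ) ≤ n := n.cast_nonneg
  rw [mul_zpow_mul_eq_rpow_mul_rpow_one_sub hn (sq_nonneg A) h₁ h₃,
    mul_zpow_mul_eq_rpow_mul_rpow_one_sub hn (sq_nonneg B) h₁ h₃]
  apply add_rpow_mul_rpow_one_sub_le hα₀ hα₁ <;> positivity

noncomputable def interpolationExponent (R₁ R₂ R₃ : ℝ) : ℝ :=
  log (R₃ / R₂) / log (R₃ / R₁)

theorem interpolationExponent_pos {R₁ R₂ R₃ : ℝ} (h₁ : 0 < R₁) (h₂ : 0 < R₂) (h₁₃ : R₁ < R₃)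
    (h₂₃ : R₂ < R₃) : 0 < interpolationExponent R₁ R₂ R₃ :=
  div_pos (log_pos ((one_lt_div h₂).2 h₂₃)) (log_pos ((one_lt_div h₁).2 h₁₃))

theorem interpolationExponent_lt_one {R₁ R₂ R₃ : ℝ} (h₁ : 0 < R₁) (h₁₂ : R₁ < R₂)
    (h₁₃ : R₁ < R₃) : interpolationExponent R₁ R₂ R₃ < 1 := by
  have h₃ : 0 < R₃ := h₁.trans h₁₃
  refine (div_lt_one (log_pos ((one_lt_div h₁).2 h₁₃))).2 ?_
  exact log_lt_log (div_pos h₃ (h₁.trans h₁₂)) (div_lt_div_of_pos_left h₃ h₁ h₁₂)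

theorem rpow_interpolationExponent_mul_rpow_one_sub {R₁ R₂ R₃ : ℝ} (h₁ : 0 < R₁) (h₂ : 0 < R₂)
    (h₃ : 0 < R₃) (h₁₃ : R₁ ≠ R₃) :
    R₁ ^ interpolationExponent R₁ R₂ R₃ * R₃ ^ (1 - interpolationExponent R₁ R₂ R₃) = R₂ := by
  have hlog : log R₃ - log R₁ ≠ 0 :=
    sub_ne_zero.2 fun h => h₁₃ (log_injOn_pos h₁ h₃ h.symm)
  rw [interpolationExponent, log_div h₃.ne' h₂.ne', log_div h₃.ne' h₁.ne', rpow_def_of_pos h₁,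
    rpow_def_of_pos h₃, ← exp_add, ← exp_log h₂, log_exp]
  congr 1
  field_simp
  ring

/-- the interpolation inequality at the heart of the three-sphere inequality:
termwise `n R₂^{2n} A² + n R₂^{-2n} B² ≤ (·at R₁)^α (·at R₃)^{1-α}` with
`α = ln(R₃/R₂)/ln(R₃/R₁)`, and hence, summing and using Hölder,
`S(R₂) ≤ S(R₁)^α S(R₃)^{1-α}` for `S(r) = Σ_n (n r^{2n}|aₙ|² + n r^{-2n}|bₙ|²)`. -/
theorem three_sphere_interpolation (R₁ R₂ R₃ : ℝ) (h0 : 0 < R₁) (h12 : R₁ < R₂)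
    (h23 : R₂ < R₃) :
    (∀ n : ℕ, 1 ≤ n → ∀ A B : ℝ, 0 ≤ A → 0 ≤ B →
      (n : ℝ) * R₂ ^ (2 * n) * A ^ 2 + (n : ℝ) * R₂ ^ (-(2 * n : ℤ)) * B ^ 2 ≤
        ((n : ℝ) * R₁ ^ (2 * n) * A ^ 2 + (n : ℝ) * R₁ ^ (-(2 * n : ℤ)) * B ^ 2)
            ^ (Real.log (R₃ / R₂) / Real.log (R₃ / R₁)) *
        ((n : ℝ) * R₃ ^ (2 * n) * A ^ 2 + (n : ℝ) * R₃ ^ (-(2 * n : ℤ)) * B ^ 2)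
            ^ (1 - Real.log (R₃ / R₂) / Real.log (R₃ / R₁))) ∧
    (∀ a b : ℕ → ℝ,
      Summable (fun n : ℕ =>
        (n : ℝ) * R₁ ^ (2 * n) * |a n| ^ 2 + (n : ℝ) * R₁ ^ (-(2 * n : ℤ)) * |b n| ^ 2) →
      Summable (fun n : ℕ =>
        (n : ℝ) * R₃ ^ (2 * n) * |a n| ^ 2 + (n : ℝ) * R₃ ^ (-(2 * n : ℤ)) * |b n| ^ 2) →
      (∑' n : ℕ,
        ((n : ℝ) * R₂ ^ (2 * n) * |a n| ^ 2 + (n : ℝ) * R₂ ^ (-(2 * n : ℤ)) * |b n| ^ 2)) ≤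
        (∑' n : ℕ,
          ((n : ℝ) * R₁ ^ (2 * n) * |a n| ^ 2 + (n : ℝ) * R₁ ^ (-(2 * n : ℤ)) * |b n| ^ 2))
            ^ (Real.log (R₃ / R₂) / Real.log (R₃ / R₁)) *
        (∑' n : ℕ,
          ((n : ℝ) * R₃ ^ (2 * n) * |a n| ^ 2 + (n : ℝ) * R₃ ^ (-(2 * n : ℤ)) * |b n| ^ 2))
            ^ (1 - Real.log (R₃ / R₂) / Real.log (R₃ / R₁))) := by
  have h2 : 0 < R₂ := h0.trans h12
  have h3 : 0 < R₃ := h2.trans h23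
  have h13 : R₁ < R₃ := h12.trans h23
  have hα₀ := interpolationExponent_pos h0 h2 h13 h23
  have hα₁ := interpolationExponent_lt_one h0 h12 h13
  have hmode : ∀ n A B, modeEnergy n A B R₂ ≤ modeEnergy n A B R₁ ^ interpolationExponent R₁ R₂ R₃ *
      modeEnergy n A B R₃ ^ (1 - interpolationExponent R₁ R₂ R₃) := by
    intro n A B
    simpa only [rpow_interpolationExponent_mul_rpow_one_sub h0 h2 h3 h13.ne] using
      modeEnergy_rpow_mul_rpow_one_sub_le hα₀ hα₁ h0.le h3.le n A B
  refine ⟨fun n _ A B _ _ => hmode n A B, fun a b hsum₁ hsum₃ => ?_⟩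
  exact tsum_le_tsum_rpow_mul_tsum_rpow_one_sub_of_le hα₀ hα₁
    (fun n => modeEnergy_nonneg n |a n| |b n| h0.le) (fun n => modeEnergy_nonneg n _ _ h3.le)
    (fun n => modeEnergy_nonneg n _ _ h2.le) hsum₁ hsum₃ (fun n => hmode n |a n| |b n|)
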